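/- In the Artin braid group B_4, the braid of the complete regeneration of a 2-point of type (A) (three cusps followed by a branch point) satisfies [(σ_3^{−1} σ_2³ σ_3) · σ_2³ · (σ_3 σ_2³ σ_3^{−1})] · [(σ_2 σ_3² σ_2)^{−1} σ_1 (σ_2 σ_3² σ_2)] = σ_2 σ_3² σ_2 σ_1 σ_3 σ_2 σ_3² σ_2. -/

import Mathlib

/-- The braid relations among `m` Artin generators `σ_1, …, σ_m`, where the
generator `σ_{k+1}` is represented by the index `k : Fin m`:
`σ_i σ_{i+1} σ_i = σ_{i+1} σ_i σ_{i+1}` and `σ_i σ_j = σ_j σ_i` for `|i - j| ≥ 2`. -/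
def braidRels (m : ℕ) : Set (FreeGroup (Fin m)) :=
  { r | (∃ i j : Fin m, (i : ℕ) + 1 = (j : ℕ) ∧
          r = FreeGroup.of i * FreeGroup.of j * FreeGroup.of i *
              (FreeGroup.of j * FreeGroup.of i * FreeGroup.of j)⁻¹) ∨
        (∃ i j : Fin m, (i : ℕ) + 2 ≤ (j : ℕ) ∧
          r = FreeGroup.of i * FreeGroup.of j * (FreeGroup.of i)⁻¹ * (FreeGroup.of j)⁻¹) }

/-- The Artin braid group `B_n` on `n` strands, presented by the generators
`σ_1, …, σ_{n-1}` subject to the braid relations. -/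
def BraidGroup (n : ℕ) : Type := PresentedGroup (braidRels (n - 1))

instance (n : ℕ) : Group (BraidGroup n) :=
  inferInstanceAs (Group (PresentedGroup (braidRels (n - 1))))

/-- The Artin generator `σ_k` of the braid group `B_n`, defined for `1 ≤ k ≤ n - 1`
(with junk value `1` for indices out of range). -/
def σ (n : ℕ) (k : ℕ) : BraidGroup n :=
  if h : 1 ≤ k ∧ k ≤ n - 1 then
    (PresentedGroup.of (⟨k - 1, by omega⟩ : Fin (n - 1)) : PresentedGroup (braidRels (n - 1)))
  else 1

/-! Write `a = σ₂`, `b = σ₃`. The braid relation `aba = bab` says `b⁻¹ab = aba⁻¹` and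
`bab⁻¹ = a⁻¹ba`, so conjugating the cube of `a` by `b^{∓1}` turns it into a conjugate of `b³`;
the three cusp braids then multiply to `ab³ab³a = (ab²a) b (ab²a)`, after one more use of the
braid relation. The branch-point factor is `(ab²a)⁻¹ σ₁ (ab²a)`, so `ab²a` cancels and the
theorem reduces to `σ₁σ₃ = σ₃σ₁`. -/

section BraidRelation

variable {G : Type*} [Group G] {a b : G}

theorem inv_mul_mul_eq_of_braid (h : a * b * a = b * a * b) : b⁻¹ * a * b = a * b * a⁻¹ := by
  calc b⁻¹ * a * b = b⁻¹ * (a * b * a) * a⁻¹ := by group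
    _ = a * b * a⁻¹ := by rw [h]; group

theorem mul_mul_inv_eq_of_braid (h : a * b * a = b * a * b) : b * a * b⁻¹ = a⁻¹ * b * a := by
  calc b * a * b⁻¹ = a⁻¹ * (a * b * a) * b⁻¹ := by group
    _ = a⁻¹ * b * a := by rw [h]; group

theorem inv_mul_pow_mul_eq_of_braid (h : a * b * a = b * a * b) (n : ℕ) :
    b⁻¹ * a ^ n * b = a * b ^ n * a⁻¹ := by
  have conj_pow_inv : (b⁻¹ * a * b) ^ n = b⁻¹ * a ^ n * b := by
    simpa only [inv_inv] using conj_pow (a := b⁻¹) (b := a) (i := n)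
  rw [← conj_pow_inv, inv_mul_mul_eq_of_braid h, conj_pow]

theorem mul_pow_mul_inv_eq_of_braid (h : a * b * a = b * a * b) (n : ℕ) :
    b * a ^ n * b⁻¹ = a⁻¹ * b ^ n * a := by
  have conj_inv_pow : (a⁻¹ * b * a) ^ n = a⁻¹ * b ^ n * a := by
    simpa only [inv_inv] using conj_pow (a := a⁻¹) (b := b) (i := n)
  rw [← conj_pow, mul_mul_inv_eq_of_braid h, conj_inv_pow]

theorem cusps_eq_of_braid (h : a * b * a = b * a * b) :
    (b⁻¹ * a ^ 3 * b) * a ^ 3 * (b * a ^ 3 * b⁻¹) = (a * b ^ 2 * a) * b * (a * b ^ 2 * a) := by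
  rw [inv_mul_pow_mul_eq_of_braid h, mul_pow_mul_inv_eq_of_braid h]
  calc a * b ^ 3 * a⁻¹ * a ^ 3 * (a⁻¹ * b ^ 3 * a)
      = a * b ^ 2 * (b * a * b) * b ^ 2 * a := by group
    _ = a * b ^ 2 * (a * b * a) * b ^ 2 * a := by rw [h]
    _ = (a * b ^ 2 * a) * b * (a * b ^ 2 * a) := by group

end BraidRelation

namespace BraidGroup

variable {m : ℕ} {i j : Fin m}

theorem of_mul_of_mul_of (h : (i : ℕ) + 1 = j) :
    (.of i * .of j * .of i : PresentedGroup (braidRels m)) = .of j * .of i * .of j :=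
  PresentedGroup.mk_eq_mk_of_mul_inv_mem (Or.inl ⟨i, j, h, rfl⟩)

theorem of_commute_of (h : (i : ℕ) + 2 ≤ j) :
    Commute (.of i : PresentedGroup (braidRels m)) (.of j) :=
  PresentedGroup.mk_eq_mk_of_mul_inv_mem (Or.inr ⟨i, j, h, by rw [mul_inv_rev, ← mul_assoc]⟩)

end BraidGroup

theorem σ_eq_of {n k : ℕ} (hk : 1 ≤ k) (hkn : k ≤ n - 1) :
    σ n k = PresentedGroup.of (⟨k - 1, by omega⟩ : Fin (n - 1)) :=
  dif_pos ⟨hk, hkn⟩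

theorem σ_mul_σ_succ_mul_σ {n i : ℕ} (hi : 1 ≤ i) (hin : i + 1 ≤ n - 1) :
    σ n i * σ n (i + 1) * σ n i = σ n (i + 1) * σ n i * σ n (i + 1) := by
  rw [σ_eq_of hi (by omega), σ_eq_of (by omega) hin]
  exact BraidGroup.of_mul_of_mul_of (by simp only; omega)

theorem σ_commute {n i j : ℕ} (hi : 1 ≤ i) (hij : i + 2 ≤ j) (hjn : j ≤ n - 1) :
    Commute (σ n i) (σ n j) := by
  rw [σ_eq_of hi (by omega), σ_eq_of (by omega) hjn]
  exact BraidGroup.of_commute_of (by simp only; omega)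

/-- In `B_4`, the braid of the complete regeneration of a 2-point of type (A):
`[(σ₃⁻¹ σ₂³ σ₃) σ₂³ (σ₃ σ₂³ σ₃⁻¹)] [(σ₂ σ₃² σ₂)⁻¹ σ₁ (σ₂ σ₃² σ₂)]
  = σ₂ σ₃² σ₂ σ₁ σ₃ σ₂ σ₃² σ₂`. -/
theorem two_point_type_A_braid :
    (((σ 4 3)⁻¹ * σ 4 2 ^ 3 * σ 4 3) * σ 4 2 ^ 3 * (σ 4 3 * σ 4 2 ^ 3 * (σ 4 3)⁻¹)) *
        ((σ 4 2 * σ 4 3 ^ 2 * σ 4 2)⁻¹ * σ 4 1 * (σ 4 2 * σ 4 3 ^ 2 * σ 4 2)) =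
      σ 4 2 * σ 4 3 ^ 2 * σ 4 2 * σ 4 1 * σ 4 3 * σ 4 2 * σ 4 3 ^ 2 * σ 4 2 := by
  rw [cusps_eq_of_braid (σ_mul_σ_succ_mul_σ (n := 4) (i := 2) (by norm_num) (by norm_num))]
  set y := σ 4 2 * σ 4 3 ^ 2 * σ 4 2
  calc y * σ 4 3 * y * (y⁻¹ * σ 4 1 * y) = y * (σ 4 3 * σ 4 1) * y := by group
    _ = y * (σ 4 1 * σ 4 3) * y := by rw [(σ_commute (n := 4) le_rfl le_rfl le_rfl).eq]
    _ = _ := by simp only [y, mul_assoc]
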